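/- Let Ω = {α ∈ ℂ : Re(α) > 0} ∪ {α : Re(α) = 0, Im(α) > 0} and H₀ = T ⋊ {s_{−1}} where T is the group of translations. Then every right coset of H₀ in PSL(2,ℂ) contains a unique element of the form s_ρ ∘ w ∘ t_b or of the form s_ρ, with ρ ∈ Ω and b ∈ ℂ. -/

import Mathlib

/-!
Left multiplication by `H₀` replaces the top row of a representative by `±` itself plus a multiple
of the bottom row and leaves the bottom row alone; rescaling then normalises one entry. If the
bottom-left entry `r` of `M = [[p, q], [r, s]]` is nonzero, this forces the representative
`[[0, ρ], [1, s / r]] = s_ρ ∘ w ∘ t_{s/r}` with `ρ = ± det M / r²`; if `r = 0` it forces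
`diag(ρ, 1) = s_ρ` with `ρ = ± p / s`. In both cases only the sign of `ρ` is left free, and `Ω`
contains exactly one of `z`, `-z` for each `z ≠ 0`.
-/

open Matrix

/-- translation matrix -/
def Tm (a : ℂ) : Matrix (Fin 2) (Fin 2) ℂ := !![1, a; 0, 1]
/-- scaling matrix -/
def Sm (α : ℂ) : Matrix (Fin 2) (Fin 2) ℂ := !![α, 0; 0, 1]
/-- involution matrix -/
def Wm : Matrix (Fin 2) (Fin 2) ℂ := !![0, 1; 1, 0]

/-- The region Ω -/
def Omega : Set ℂ := {α | 0 < α.re ∨ (α.re = 0 ∧ 0 < α.im)}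

/-- The subgroup H₀ = T ⋊ {s₋₁}: matrices of translations `t_a` and of `t_a ∘ s₋₁`. -/
def H0 : Set (Matrix (Fin 2) (Fin 2) ℂ) :=
  {m | ∃ a : ℂ, m = Tm a ∨ m = Tm a * Sm (-1)}

lemma neg_notMem_Omega {z : ℂ} (h : z ∈ Omega) : -z ∉ Omega := by
  simp only [Omega, Set.mem_ofPred_eq, Complex.neg_re, Complex.neg_im] at *
  rcases h with h | ⟨h1, h2⟩ <;> push Not <;> constructor <;> intros <;> linarith

lemma mem_Omega_or_neg_mem_Omega {z : ℂ} (h : z ≠ 0) : z ∈ Omega ∨ -z ∈ Omega := by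
  simp only [Omega, Set.mem_ofPred_eq, Complex.neg_re, Complex.neg_im]
  rcases lt_trichotomy z.re 0 with hre | hre | hre
  · exact Or.inr (Or.inl (by linarith))
  · have him : z.im ≠ 0 := fun him => h (Complex.ext hre him)
    rcases lt_or_gt_of_ne him with him | him
    · exact Or.inr (Or.inr ⟨by linarith, by linarith⟩)
    · exact Or.inl (Or.inr ⟨hre, him⟩)
  · exact Or.inl (Or.inl hre)

lemma existsUnique_mem_Omega {z : ℂ} (hz : z ≠ 0) : ∃! ρ, ρ ∈ Omega ∧ (ρ = z ∨ ρ = -z) := by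
  rcases mem_Omega_or_neg_mem_Omega hz with h | h
  · refine ⟨z, ⟨h, Or.inl rfl⟩, ?_⟩
    rintro ρ ⟨hρ, rfl | rfl⟩
    · rfl
    · exact absurd hρ (neg_notMem_Omega h)
  · refine ⟨-z, ⟨h, Or.inr rfl⟩, ?_⟩
    rintro ρ ⟨hρ, rfl | rfl⟩
    · exact absurd h (neg_notMem_Omega hρ)
    · rfl

lemma Sm_mul_Wm_mul_Tm (ρ b : ℂ) : Sm ρ * Wm * Tm b = !![0, ρ; 1, b] := by
  simp [Sm, Wm, Tm]

lemma mem_H0_iff {m : Matrix (Fin 2) (Fin 2) ℂ} :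
    m ∈ H0 ↔ ∃ ε a : ℂ, (ε = 1 ∨ ε = -1) ∧ m = !![ε, a; 0, 1] := by
  have hS : ∀ a, Tm a * Sm (-1) = !![-1, a; 0, 1] := fun a => by simp [Tm, Sm]
  constructor
  · rintro ⟨a, rfl | rfl⟩
    · exact ⟨1, a, Or.inl rfl, rfl⟩
    · exact ⟨-1, a, Or.inr rfl, hS a⟩
  · rintro ⟨ε, a, rfl | rfl, rfl⟩
    · exact ⟨a, Or.inl rfl⟩
    · exact ⟨a, Or.inr (hS a).symm⟩

/-- `N` represents, up to a nonzero scalar, an element of the right coset `H₀ M`. -/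
def MemCoset (N M : Matrix (Fin 2) (Fin 2) ℂ) : Prop :=
  ∃ h ∈ H0, ∃ c : ℂ, c ≠ 0 ∧ N = c • (h * M)

lemma smul_upperTriangular_mul (c ε a p q r s : ℂ) :
    c • (!![ε, a; 0, 1] * !![p, q; r, s]) =
      !![c * (ε * p + a * r), c * (ε * q + a * s); c * r, c * s] := by
  simp

lemma memCoset_iff (x y z w p q r s : ℂ) :
    MemCoset !![x, y; z, w] !![p, q; r, s] ↔
      ∃ c ≠ 0, ∃ ε a : ℂ, (ε = 1 ∨ ε = -1) ∧
        x = c * (ε * p + a * r) ∧ y = c * (ε * q + a * s) ∧ z = c * r ∧ w = c * s := by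
  simp only [MemCoset, mem_H0_iff]
  constructor
  · rintro ⟨h, ⟨ε, a, hε, rfl⟩, c, hc, hN⟩
    rw [smul_upperTriangular_mul] at hN
    exact ⟨c, hc, ε, a, hε, by simpa [and_assoc] using hN⟩
  · rintro ⟨c, hc, ε, a, hε, hN⟩
    refine ⟨_, ⟨ε, a, hε, rfl⟩, c, hc, ?_⟩
    rw [smul_upperTriangular_mul]
    simpa [and_assoc] using hN

lemma memCoset_Sm_Wm_Tm_iff {p q r s : ℂ} (hr : r ≠ 0) (ρ b : ℂ) :
    MemCoset (Sm ρ * Wm * Tm b) !![p, q; r, s] ↔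
      b = s / r ∧ (ρ = (p * s - q * r) / r ^ 2 ∨ ρ = -((p * s - q * r) / r ^ 2)) := by
  rw [Sm_mul_Wm_mul_Tm, memCoset_iff]
  constructor
  · rintro ⟨c, hc, ε, a, hε, h0, hρ, h1, hb⟩
    have hc : c = 1 / r := by field_simp; exact h1.symm
    subst hc
    have ha : a = -ε * p / r := by field_simp at h0 ⊢; linear_combination -h0
    subst ha
    refine ⟨by rw [hb]; ring, ?_⟩
    rcases hε with rfl | rfl
    · right; rw [hρ]; field_simp; ring
    · left; rw [hρ]; field_simp; ring
  · rintro ⟨rfl, hρ⟩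
    refine ⟨1 / r, one_div_ne_zero hr, ?_⟩
    rcases hρ with rfl | rfl
    · refine ⟨-1, p / r, Or.inr rfl, ?_, ?_, ?_, ?_⟩ <;> field_simp <;> ring
    · refine ⟨1, -p / r, Or.inl rfl, ?_, ?_, ?_, ?_⟩ <;> field_simp <;> ring

lemma not_memCoset_Sm {p q r s : ℂ} (hr : r ≠ 0) (ρ : ℂ) :
    ¬ MemCoset (Sm ρ) !![p, q; r, s] := by
  rw [Sm, memCoset_iff]
  rintro ⟨c, hc, -, -, -, -, -, h0, -⟩
  exact mul_ne_zero hc hr h0.symm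

lemma not_memCoset_Sm_Wm_Tm {p q s : ℂ} (ρ b : ℂ) :
    ¬ MemCoset (Sm ρ * Wm * Tm b) !![p, q; 0, s] := by
  rw [Sm_mul_Wm_mul_Tm, memCoset_iff]
  rintro ⟨c, -, -, -, -, -, -, h1, -⟩
  simp at h1

lemma memCoset_Sm_iff {p q s : ℂ} (hs : s ≠ 0) (ρ : ℂ) :
    MemCoset (Sm ρ) !![p, q; 0, s] ↔ ρ = p / s ∨ ρ = -(p / s) := by
  rw [Sm, memCoset_iff]
  constructor
  · rintro ⟨c, hc, ε, a, hε, hρ, h0, -, h1⟩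
    have hc : c = 1 / s := by field_simp; exact h1.symm
    subst hc
    have ha : a = -ε * q / s := by field_simp at h0 ⊢; linear_combination -h0
    subst ha
    rcases hε with rfl | rfl
    · left; rw [hρ]; field_simp; ring
    · right; rw [hρ]; field_simp; ring
  · intro hρ
    refine ⟨1 / s, one_div_ne_zero hs, ?_⟩
    rcases hρ with rfl | rfl
    · refine ⟨1, -q / s, Or.inl rfl, ?_, ?_, ?_, ?_⟩ <;> field_simp <;> ring
    · refine ⟨-1, q / s, Or.inr rfl, ?_, ?_, ?_, ?_⟩ <;> field_simp <;> ring

/-- Every right coset `H₀ g` in PSL(2,ℂ) contains a unique element of the form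
`s_ρ ∘ w ∘ t_b` or of the form `s_ρ`, with `ρ ∈ Ω`, `b ∈ ℂ`. -/
theorem stmt_2 (M : Matrix (Fin 2) (Fin 2) ℂ) (hM : M.det ≠ 0) :
    ∃! p : (ℂ × ℂ) ⊕ ℂ,
      match p with
      | Sum.inl (ρ, b) =>
          ρ ∈ Omega ∧ ∃ h ∈ H0, ∃ c : ℂ, c ≠ 0 ∧ Sm ρ * Wm * Tm b = c • (h * M)
      | Sum.inr ρ =>
          ρ ∈ Omega ∧ ∃ h ∈ H0, ∃ c : ℂ, c ≠ 0 ∧ Sm ρ = c • (h * M) := by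
  obtain ⟨p, q, r, s, rfl⟩ : ∃ p q r s, M = !![p, q; r, s] := ⟨_, _, _, _, eta_fin_two M⟩
  rw [det_fin_two_of] at hM
  by_cases hr : r = 0
  · subst hr
    have hs : s ≠ 0 := by rintro rfl; simp at hM
    have hp : p ≠ 0 := by rintro rfl; simp at hM
    obtain ⟨ρ, hρ, huniq⟩ := existsUnique_mem_Omega (div_ne_zero hp hs)
    refine ⟨Sum.inr ρ, ⟨hρ.1, (memCoset_Sm_iff hs ρ).2 hρ.2⟩, ?_⟩
    rintro (⟨ρ', b'⟩ | ρ') ⟨hρ', hcoset⟩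
    · exact absurd hcoset (not_memCoset_Sm_Wm_Tm ρ' b')
    · rw [huniq ρ' ⟨hρ', (memCoset_Sm_iff hs ρ').1 hcoset⟩]
  · have hdet : (p * s - q * r) / r ^ 2 ≠ 0 := div_ne_zero hM (pow_ne_zero 2 hr)
    obtain ⟨ρ, hρ, huniq⟩ := existsUnique_mem_Omega hdet
    refine ⟨Sum.inl (ρ, s / r), ⟨hρ.1, (memCoset_Sm_Wm_Tm_iff hr ρ _).2 ⟨rfl, hρ.2⟩⟩, ?_⟩
    rintro (⟨ρ', b'⟩ | ρ') ⟨hρ', hcoset⟩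
    · obtain ⟨rfl, hsign⟩ := (memCoset_Sm_Wm_Tm_iff hr ρ' b').1 hcoset
      rw [huniq ρ' ⟨hρ', hsign⟩]
    · exact absurd hcoset (not_memCoset_Sm hr ρ')
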